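/- Let P : Cᵒᵖ → BoolAlg be a Boolean doctrine over a category C with finite products, let F = (F_X)_{X ∈ C} be a universal filter for P, I = (I_X)_{X ∈ C} a universal ideal for P, Y ∈ C and α ∈ P(Y). Then: (1) the universal filter generated by F together with α intersects I in some component if and only if there are X ∈ C, n ∈ ℕ, morphisms fᵢ : X → Y (i = 1, …, n) and β ∈ F_X such that β ∧ ⋀_{i=1}^{n} P(fᵢ)(α) ∈ I_X; and (2) the universal ideal generated by I together with α intersects F in some component if and only if there is X ∈ C with I_X ∩ F_X ≠ ∅, or there are Z ∈ C and γ ∈ I_Z such that P(pr₁)(α) ∨ P(pr₂)(γ) ∈ F_{Y×Z}. -/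

import Mathlib

/-!
The universal filter generated by `F` and `α` is, in the component `X`, the upward closure of
the meets `β ∧ ⋀_{f ∈ s} P(f)(α)` with `β ∈ F_X` and `s` a finite set of maps `X → Y`: this
family is already a universal filter. As each `I_X` is downward closed, (1) follows.

For (2), consider the `φ ∈ P(X)` having, for some `γ ∈ I_Z`, a finite meet of reindexings along
maps `Y × Z → X` below `P(pr₁)(α) ∨ P(pr₂)(γ)`. This is a universal ideal containing `I` and `α`:
for the disjunction axiom, the two witnesses can share their `Y`-variable, so a single copy of
`Y` suffices. If such a `φ` lies in `F_X`, then so does `P(pr₁)(α) ∨ P(pr₂)(γ)` in `F_{Y × Z}`.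
-/

open CategoryTheory CategoryTheory.Limits Opposite

universe w v u v₁ u₁ v₂ u₂ v₃ u₃

namespace BooleanDoctrine

/-- Elements of a Boolean algebra in the category `BoolAlg` can be acted on by morphisms. -/
instance (X Y : BoolAlg) : FunLike (X ⟶ Y) X Y :=
  { coe := fun f => f.hom
    coe_injective := fun _ _ h => BoolAlg.hom_ext (DFunLike.coe_injective h) }

/-- A filter of a Boolean algebra: contains `⊤`, closed under binary meets, upward closed. -/
def IsBAFilter {A : Type*} [BooleanAlgebra A] (F : Set A) : Prop :=
  (⊤ : A) ∈ F ∧ (∀ a b : A, a ∈ F → b ∈ F → a ⊓ b ∈ F) ∧ ∀ a b : A, a ∈ F → a ≤ b → b ∈ F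

/-- The fiber of a Boolean doctrine at an object of the base category. -/
abbrev fiber {C : Type u₁} [Category.{v₁} C] (P : Cᵒᵖ ⥤ BoolAlg.{w}) (X : C) : Type w :=
  P.obj (op X)

/-- A universal filter for a Boolean doctrine `P : Cᵒᵖ ⥤ BoolAlg`. -/
def IsUniversalFilter {C : Type u₁} [Category.{v₁} C] [HasFiniteProducts C]
    (P : Cᵒᵖ ⥤ BoolAlg.{w}) (F : ∀ X : C, Set (P.obj (op X))) : Prop :=
  (∀ (X Y : C) (f : X ⟶ Y) (α : P.obj (op Y)), α ∈ F Y → P.map f.op α ∈ F X) ∧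
    ∀ X : C, IsBAFilter (F X)

/-- A universal ideal for a Boolean doctrine `P : Cᵒᵖ ⥤ BoolAlg`. -/
def IsUniversalIdeal {C : Type u₁} [Category.{v₁} C] [HasFiniteProducts C]
    (P : Cᵒᵖ ⥤ BoolAlg.{w}) (I : ∀ X : C, Set (P.obj (op X))) : Prop :=
  (∀ (X Y : C) (m : ℕ) (f : Fin m → (X ⟶ Y)) (α : P.obj (op Y)),
      (Finset.univ.inf fun j => P.map (f j).op α) ∈ I X → α ∈ I Y) ∧
    (∀ (X : C) (a b : P.obj (op X)), a ≤ b → b ∈ I X → a ∈ I X) ∧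
    (∀ (X₁ X₂ : C) (α₁ : P.obj (op X₁)) (α₂ : P.obj (op X₂)), α₁ ∈ I X₁ → α₂ ∈ I X₂ →
      P.map (prod.fst : X₁ ⨯ X₂ ⟶ X₁).op α₁ ⊔ P.map (prod.snd : X₁ ⨯ X₂ ⟶ X₂).op α₂ ∈
        I (X₁ ⨯ X₂)) ∧
    (⊥ : P.obj (op (⊤_ C))) ∈ I (⊤_ C)

/-- A universal ultrafilter for a Boolean doctrine `P : Cᵒᵖ ⥤ BoolAlg`. -/
def IsUniversalUltrafilter {C : Type u₁} [Category.{v₁} C] [HasFiniteProducts C]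
    (P : Cᵒᵖ ⥤ BoolAlg.{w}) (F : ∀ X : C, Set (P.obj (op X))) : Prop :=
  (∀ (X Y : C) (f : X ⟶ Y) (α : P.obj (op Y)), α ∈ F Y → P.map f.op α ∈ F X) ∧
    (∀ X : C, IsBAFilter (F X)) ∧
    (∀ (X₁ X₂ : C) (α₁ : P.obj (op X₁)) (α₂ : P.obj (op X₂)),
      P.map (prod.fst : X₁ ⨯ X₂ ⟶ X₁).op α₁ ⊔ P.map (prod.snd : X₁ ⨯ X₂ ⟶ X₂).op α₂ ∈
          F (X₁ ⨯ X₂) →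
        α₁ ∈ F X₁ ∨ α₂ ∈ F X₂) ∧
    (⊥ : P.obj (op (⊤_ C))) ∉ F (⊤_ C)

/-- Richness of a Boolean doctrine with respect to a family of subsets of the fibers. -/
def IsRich {C : Type u₁} [Category.{v₁} C] [HasFiniteProducts C]
    (P : Cᵒᵖ ⥤ BoolAlg.{w}) (F : ∀ X : C, Set (P.obj (op X))) : Prop :=
  ∀ (X : C) (α : P.obj (op X)), α ∉ F X → ∃ c : (⊤_ C) ⟶ X, P.map c.op α ∉ F (⊤_ C)

/-- The failure of the "universal closure" of `a` witnessed by a constant `c : ⊤ ⟶ X`. -/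
def IsRichAt {C : Type u₁} [Category.{v₁} C] [HasFiniteProducts C]
    (P : Cᵒᵖ ⥤ BoolAlg.{w}) (F : ∀ X : C, Set (P.obj (op X)))
    (X : C) (a : P.obj (op X)) : Prop :=
  ∃ c : (⊤_ C) ⟶ X, P.map c.op a ∉ F (⊤_ C)

/-- The universal filter generated by a family of subsets of the fibers: the intersection of
all universal filters containing the family componentwise. -/
def genUnivFilter {C : Type u₁} [Category.{v₁} C] [HasFiniteProducts C]
    (P : Cᵒᵖ ⥤ BoolAlg.{w}) (A : ∀ X : C, Set (P.obj (op X))) :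
    ∀ X : C, Set (P.obj (op X)) := fun X =>
  {φ | ∀ G : ∀ X' : C, Set (P.obj (op X')),
    IsUniversalFilter P G → (∀ X', A X' ⊆ G X') → φ ∈ G X}

/-- The universal ideal generated by a family of subsets of the fibers: the intersection of
all universal ideals containing the family componentwise. -/
def genUnivIdeal {C : Type u₁} [Category.{v₁} C] [HasFiniteProducts C]
    (P : Cᵒᵖ ⥤ BoolAlg.{w}) (A : ∀ X : C, Set (P.obj (op X))) :
    ∀ X : C, Set (P.obj (op X)) := fun X =>
  {φ | ∀ J : ∀ X' : C, Set (P.obj (op X')),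
    IsUniversalIdeal P J → (∀ X', A X' ⊆ J X') → φ ∈ J X}

/-- The family of subsets of the fibers placing the element `α i` in the component `Y i`. -/
def familyOfPoints {C : Type u₁} [Category.{v₁} C] (P : Cᵒᵖ ⥤ BoolAlg.{w}) {ι : Type u₃}
    (Y : ι → C) (α : ∀ i, P.obj (op (Y i))) : ∀ X : C, Set (P.obj (op X)) := fun X =>
  {a | ∃ (i : ι) (h : Y i = X), a = P.map (eqToHom h.symm).op (α i)}

/-- The subsets doctrine, sending a set to its powerset Boolean algebra and a function to
its preimage map. -/
def subsetsDoctrine : (Type v)ᵒᵖ ⥤ BoolAlg.{v} where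
  obj X := BoolAlg.of (Set X.unop)
  map f :=
    BoolAlg.ofHom
    { toFun := fun S => f.unop ⁻¹' S
      map_sup' := fun _ _ => rfl
      map_inf' := fun _ _ => rfl
      map_top' := rfl
      map_bot' := rfl }
  map_id _ := rfl
  map_comp _ _ := rfl

/-- A Boolean doctrine morphism: a finite-product-preserving functor together with a
natural transformation. -/
structure DoctrineHom {C : Type u₁} [Category.{v₁} C] {D : Type u₂} [Category.{v₂} D]
    (P : Cᵒᵖ ⥤ BoolAlg.{w}) (R : Dᵒᵖ ⥤ BoolAlg.{w}) where
  functor : C ⥤ D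
  preserves : PreservesFiniteProducts functor
  trans : P ⟶ functor.op ⋙ R

/-- Composition of Boolean doctrine morphisms. -/
def DoctrineHom.comp {C : Type u₁} [Category.{v₁} C] {D : Type u₂} [Category.{v₂} D]
    {E : Type u₃} [Category.{v₃} E]
    {P : Cᵒᵖ ⥤ BoolAlg.{w}} {R : Dᵒᵖ ⥤ BoolAlg.{w}} {S : Eᵒᵖ ⥤ BoolAlg.{w}}
    (Φ : DoctrineHom P R) (Ψ : DoctrineHom R S) : DoctrineHom P S where
  functor := Φ.functor ⋙ Ψ.functor
  preserves := by
    have := Φ.preserves; have := Ψ.preserves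
    infer_instance
  trans := Φ.trans ≫ Functor.whiskerLeft Φ.functor.op Ψ.trans

/-- A first-order structure on a Boolean doctrine: fiberwise right adjoints to reindexing
along first projections, satisfying the Beck–Chevalley condition. -/
structure FOStructure {C : Type u₁} [Category.{v₁} C] [HasFiniteProducts C]
    (P : Cᵒᵖ ⥤ BoolAlg.{w}) where
  fa : ∀ X Y : C, P.obj (op (X ⨯ Y)) → P.obj (op X)
  adj : ∀ (X Y : C) (α : P.obj (op X)) (β : P.obj (op (X ⨯ Y))),
      α ≤ fa X Y β ↔ P.map (prod.fst : X ⨯ Y ⟶ X).op α ≤ β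
  bc : ∀ (X X' Y : C) (f : X' ⟶ X) (β : P.obj (op (X ⨯ Y))),
      P.map f.op (fa X Y β) = fa X' Y (P.map (prod.map f (𝟙 Y)).op β)

/-- The existential quantifier `∃ = ¬∀¬` associated to a first-order structure. -/
noncomputable def FOStructure.ex {C : Type u₁} [Category.{v₁} C] [HasFiniteProducts C]
    {P : Cᵒᵖ ⥤ BoolAlg.{w}} (fo : FOStructure P) (X Y : C)
    (β : P.obj (op (X ⨯ Y))) : P.obj (op X) :=
  (fo.fa X Y βᶜ)ᶜ

/-- The canonical comparison morphism `M X ⨯ M Y ⟶ M (X ⨯ Y)` of a Boolean doctrine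
morphism, inverse to the product comparison morphism. -/
noncomputable def DoctrineHom.prodPair {C : Type u₁} [Category.{v₁} C] [HasFiniteProducts C]
    {D : Type u₂} [Category.{v₂} D] [HasFiniteProducts D]
    {P : Cᵒᵖ ⥤ BoolAlg.{w}} {R : Dᵒᵖ ⥤ BoolAlg.{w}} (Φ : DoctrineHom P R) (X Y : C) :
    (Φ.functor.obj X ⨯ Φ.functor.obj Y) ⟶ Φ.functor.obj (X ⨯ Y) :=
  letI := Φ.preserves
  (PreservesLimitPair.iso Φ.functor X Y).inv

/-- The image of an element of `P (X ⨯ Y)` in `R (M X ⨯ M Y)`, transported along the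
canonical isomorphism `M (X ⨯ Y) ≅ M X ⨯ M Y`. -/
noncomputable def DoctrineHom.transProd {C : Type u₁} [Category.{v₁} C] [HasFiniteProducts C]
    {D : Type u₂} [Category.{v₂} D] [HasFiniteProducts D]
    {P : Cᵒᵖ ⥤ BoolAlg.{w}} {R : Dᵒᵖ ⥤ BoolAlg.{w}} (Φ : DoctrineHom P R) (X Y : C)
    (α : P.obj (op (X ⨯ Y))) : R.obj (op (Φ.functor.obj X ⨯ Φ.functor.obj Y)) :=
  R.map (Φ.prodPair X Y).op (Φ.trans.app (op (X ⨯ Y)) α)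

/-- A Boolean doctrine morphism between first-order Boolean doctrines is first-order when it
commutes with the universal quantifiers. -/
def DoctrineHom.IsFO {C : Type u₁} [Category.{v₁} C] [HasFiniteProducts C]
    {D : Type u₂} [Category.{v₂} D] [HasFiniteProducts D]
    {P : Cᵒᵖ ⥤ BoolAlg.{w}} {R : Dᵒᵖ ⥤ BoolAlg.{w}} (Φ : DoctrineHom P R)
    (foP : FOStructure P) (foR : FOStructure R) : Prop :=
  ∀ (X Y : C) (β : P.obj (op (X ⨯ Y))),
    (Φ.trans.app (op X) (foP.fa X Y β) : R.obj (op (Φ.functor.obj X))) =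
      foR.fa (Φ.functor.obj X) (Φ.functor.obj Y) (Φ.transProd X Y β)

/-- The Boolean doctrine morphism with identity functor part induced by a natural
transformation between two doctrines over the same base. -/
def idDoctrineHom {C : Type u₁} [Category.{v₁} C] {P Q : Cᵒᵖ ⥤ BoolAlg.{w}} (η : P ⟶ Q) :
    DoctrineHom P Q where
  functor := 𝟭 C
  preserves := inferInstance
  trans := η

/-- A quantifier completion of a Boolean doctrine `P`: a first-order Boolean doctrine `Q`
over the same base category together with a Boolean doctrine morphism `(𝟭 C, ι) : P ⟶ Q`
whose functor part is the identity, such that every Boolean doctrine morphism from `P` to a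
first-order Boolean doctrine factors uniquely through it via a first-order Boolean doctrine
morphism. -/
structure QuantifierCompletion.{w', v', u', v₁', u₁'} {C : Type u₁'} [Category.{v₁'} C]
    [HasFiniteProducts C] (P : Cᵒᵖ ⥤ BoolAlg.{w'}) where
  Q : Cᵒᵖ ⥤ BoolAlg.{w'}
  fo : FOStructure Q
  ι : P ⟶ Q
  univ : ∀ {D : Type u'} [Category.{v'} D] [HasFiniteProducts D]
      (R : Dᵒᵖ ⥤ BoolAlg.{w'}) (foR : FOStructure R) (Φ : DoctrineHom P R),
      ∃! Ψ : DoctrineHom Q R, Ψ.IsFO fo foR ∧ Φ = (idDoctrineHom ι).comp Ψ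

/-- A propositional model of a Boolean doctrine: a Boolean doctrine morphism to the
subsets doctrine. -/
abbrev PropModel {C : Type u} [Category.{v} C] (P : Cᵒᵖ ⥤ BoolAlg.{v}) :=
  DoctrineHom P subsetsDoctrine.{v}

/-- The subset of `M X` interpreting an element `α ∈ P X` in a propositional model. -/
def PropModel.interp {C : Type u} [Category.{v} C] {P : Cᵒᵖ ⥤ BoolAlg.{v}}
    (M : PropModel P) {X : C} (α : P.obj (op X)) : Set (M.functor.obj X) :=
  M.trans.app (op X) α



/-- The object map of a Boolean doctrine morphism. -/
abbrev DoctrineHom.onObj {C : Type u₁} [Category.{v₁} C] {D : Type u₂} [Category.{v₂} D]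
    {P : Cᵒᵖ ⥤ BoolAlg.{w}} {R : Dᵒᵖ ⥤ BoolAlg.{w}} (Φ : DoctrineHom P R) (X : C) : D :=
  Φ.functor.obj X

/-- The component at `X` of the natural transformation of a Boolean doctrine morphism,
applied to an element of the fiber. -/
abbrev DoctrineHom.appAt {C : Type u₁} [Category.{v₁} C] {D : Type u₂} [Category.{v₂} D]
    {P : Cᵒᵖ ⥤ BoolAlg.{w}} {R : Dᵒᵖ ⥤ BoolAlg.{w}} (Φ : DoctrineHom P R) (X : C)
    (a : P.obj (op X)) : R.obj (op (Φ.functor.obj X)) :=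
  Φ.trans.app (op X) a

theorem _root_.Finset.exists_fin_inf_comp_eq {ι α : Type*} [SemilatticeInf α] [OrderTop α]
    (s : Finset ι) (g : ι → α) :
    ∃ (n : ℕ) (f : Fin n → ι), Finset.univ.inf (g ∘ f) = s.inf g := by
  classical
  induction s using Finset.induction_on with
  | empty => exact ⟨0, Fin.elim0, by simp⟩
  | insert i s _ ih =>
    obtain ⟨n, f, hf⟩ := ih
    exact ⟨n + 1, Fin.cons i f, by simp [Fin.univ_succ, Function.comp_def, ← hf]⟩

theorem IsBAFilter.finset_inf_mem {A ι : Type*} [BooleanAlgebra A] {F : Set A}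
    (hF : IsBAFilter F) {s : Finset ι} {g : ι → A} (h : ∀ i ∈ s, g i ∈ F) : s.inf g ∈ F := by
  classical
  induction s using Finset.induction_on with
  | empty => exact hF.1
  | insert i s _ ih =>
    rw [Finset.inf_insert]
    exact hF.2.1 _ _ (h i (s.mem_insert_self i))
      (ih fun j hj => h j (Finset.mem_insert_of_mem hj))

section Reindexing

variable {C : Type u₁} [Category.{v₁} C] (P : Cᵒᵖ ⥤ BoolAlg.{w})

theorem reindex_mono {A B : Cᵒᵖ} (u : A ⟶ B) {a b : P.obj A} (h : a ≤ b) :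
    P.map u a ≤ P.map u b :=
  OrderHomClass.mono (P.map u).hom h

theorem reindex_inf {A B : Cᵒᵖ} (u : A ⟶ B) (a b : P.obj A) :
    P.map u (a ⊓ b) = P.map u a ⊓ P.map u b :=
  map_inf (P.map u).hom a b

theorem reindex_sup {A B : Cᵒᵖ} (u : A ⟶ B) (a b : P.obj A) :
    P.map u (a ⊔ b) = P.map u a ⊔ P.map u b :=
  map_sup (P.map u).hom a b

theorem reindex_finset_inf {A B : Cᵒᵖ} (u : A ⟶ B) {ι : Type*} (s : Finset ι)
    (g : ι → P.obj A) : P.map u (s.inf g) = s.inf fun i => P.map u (g i) :=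
  map_finset_inf (P.map u).hom s g

theorem reindex_comp {X Y Z : C} (f : X ⟶ Y) (g : Y ⟶ Z) (a : P.obj (op Z)) :
    P.map (f ≫ g).op a = P.map f.op (P.map g.op a) := by
  rw [op_comp, P.map_comp]
  rfl

theorem reindex_id {X : C} (a : P.obj (op X)) : P.map (𝟙 X).op a = a := by
  rw [op_id, P.map_id]
  rfl

variable [HasFiniteProducts C]

theorem IsUniversalFilter.finset_inf_reindex_mem {G : ∀ X : C, Set (P.obj (op X))}
    (hG : IsUniversalFilter P G) {X Y : C} {ι : Type*} (s : Finset ι) (f : ι → (X ⟶ Y))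
    {a : P.obj (op Y)} (ha : a ∈ G Y) : (s.inf fun i => P.map (f i).op a) ∈ G X :=
  IsBAFilter.finset_inf_mem (hG.2 X) fun i _ => hG.1 X Y (f i) a ha

noncomputable def extSup {X₁ X₂ : C} (a : P.obj (op X₁)) (b : P.obj (op X₂)) :
    P.obj (op (X₁ ⨯ X₂)) :=
  P.map (prod.fst : X₁ ⨯ X₂ ⟶ X₁).op a ⊔ P.map (prod.snd : X₁ ⨯ X₂ ⟶ X₂).op b

theorem reindex_lift_extSup {W X₁ X₂ : C} (f : W ⟶ X₁) (g : W ⟶ X₂) (a : P.obj (op X₁))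
    (b : P.obj (op X₂)) :
    P.map (prod.lift f g).op (extSup P a b) = P.map f.op a ⊔ P.map g.op b := by
  rw [extSup, reindex_sup, ← reindex_comp, ← reindex_comp, prod.lift_fst, prod.lift_snd]

theorem reindex_prodMap_id_extSup {X Z' Z : C} (g : Z' ⟶ Z) (a : P.obj (op X))
    (b : P.obj (op Z)) :
    P.map (prod.map (𝟙 X) g).op (extSup P a b) = extSup P a (P.map g.op b) := by
  rw [← prod.lift_fst_comp_snd_comp, reindex_lift_extSup, reindex_comp, reindex_comp,
    reindex_id]
  rfl

end Reindexing

section Adjoin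

variable {C : Type u₁} [Category.{v₁} C] (P : Cᵒᵖ ⥤ BoolAlg.{w}) {Y : C}
  (α : P.obj (op Y))

abbrev adjoin (A : ∀ X : C, Set (P.obj (op X))) : ∀ X : C, Set (P.obj (op X)) := fun X =>
  A X ∪ familyOfPoints P (fun _ : PUnit.{u₃ + 1} => Y) (fun _ => α) X

theorem adjoin_subset_iff {A G : ∀ X : C, Set (P.obj (op X))} :
    (∀ X, adjoin P α A X ⊆ G X) ↔ (∀ X, A X ⊆ G X) ∧ α ∈ G Y := by
  simp only [Set.union_subset_iff, forall_and]
  refine and_congr_right' ⟨fun h => h Y ⟨⟨⟩, rfl, (reindex_id P α).symm⟩, ?_⟩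
  rintro h X _ ⟨_, rfl, rfl⟩
  rwa [eqToHom_refl, reindex_id]

variable [HasFiniteProducts C] (F I : ∀ X : C, Set (P.obj (op X)))

def filterAdjoin : ∀ X : C, Set (P.obj (op X)) := fun X =>
  {φ | ∃ β ∈ F X, ∃ s : Finset (X ⟶ Y), β ⊓ s.inf (fun f => P.map f.op α) ≤ φ}

theorem isUniversalFilter_filterAdjoin (hF : IsUniversalFilter P F) :
    IsUniversalFilter P (filterAdjoin P α F) := by
  classical
  constructor
  · rintro X X' u φ ⟨β, hβ, s, hle⟩
    refine ⟨P.map u.op β, hF.1 X X' u β hβ, s.image (u ≫ ·), ?_⟩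
    calc P.map u.op β ⊓ (s.image (u ≫ ·)).inf (fun f => P.map f.op α)
        = P.map u.op (β ⊓ s.inf fun f => P.map f.op α) := by
          simp only [Finset.inf_image, Function.comp_def, reindex_comp, reindex_inf,
            reindex_finset_inf]
      _ ≤ P.map u.op φ := reindex_mono P _ hle
  intro X
  refine ⟨⟨⊤, (hF.2 X).1, ∅, le_top⟩, ?_, ?_⟩
  · rintro a b ⟨β₁, hβ₁, s₁, h₁⟩ ⟨β₂, hβ₂, s₂, h₂⟩
    refine ⟨β₁ ⊓ β₂, (hF.2 X).2.1 _ _ hβ₁ hβ₂, s₁ ∪ s₂, ?_⟩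
    rw [Finset.inf_union]
    exact le_inf ((inf_le_inf inf_le_left inf_le_left).trans h₁)
      ((inf_le_inf inf_le_right inf_le_right).trans h₂)
  · rintro a b ⟨β, hβ, s, h⟩ hab
    exact ⟨β, hβ, s, h.trans hab⟩

theorem adjoin_subset_filterAdjoin (hF : IsUniversalFilter P F) (X : C) :
    adjoin P α F X ⊆ filterAdjoin P α F X :=
  (adjoin_subset_iff P α (G := filterAdjoin P α F)).2
    ⟨fun X φ hφ => ⟨φ, hφ, ∅, inf_le_left⟩, ⟨⊤, (hF.2 Y).1, {𝟙 Y},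
      by simp only [Finset.inf_singleton, reindex_id, top_inf_eq, le_rfl]⟩⟩ X

theorem exists_genUnivFilter_inter_nonempty_iff (hF : IsUniversalFilter P F)
    (hI : ∀ X, IsLowerSet (I X)) :
    (∃ X : C, (genUnivFilter P (adjoin P α F) X ∩ I X).Nonempty) ↔
      ∃ (X : C) (n : ℕ) (f : Fin n → (X ⟶ Y)) (β : P.obj (op X)),
        β ∈ F X ∧ β ⊓ (Finset.univ.inf fun i => P.map (f i).op α) ∈ I X := by
  constructor
  · rintro ⟨X, φ, hgen, hφ⟩
    obtain ⟨β, hβ, s, hle⟩ := hgen _ (isUniversalFilter_filterAdjoin P α F hF)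
      (adjoin_subset_filterAdjoin P α F hF)
    obtain ⟨n, f, hf⟩ := s.exists_fin_inf_comp_eq fun f => P.map f.op α
    rw [← hf] at hle
    exact ⟨X, n, f, β, hβ, hI X hle hφ⟩
  · rintro ⟨X, n, f, β, hβ, hmem⟩
    refine ⟨X, _, fun G hG hsub => ?_, hmem⟩
    obtain ⟨hFG, hαG⟩ := (adjoin_subset_iff P α).1 hsub
    exact (hG.2 X).2.1 _ _ (hFG X hβ) (hG.finset_inf_reindex_mem P _ f hαG)

def idealAdjoin : ∀ X : C, Set (P.obj (op X)) := fun X =>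
  {φ | ∃ (Z : C), ∃ γ ∈ I Z, ∃ s : Finset (Y ⨯ Z ⟶ X),
    s.inf (fun f => P.map f.op φ) ≤ extSup P α γ}

theorem subset_idealAdjoin (X : C) : I X ⊆ idealAdjoin P α I X := fun φ hφ =>
  ⟨X, φ, hφ, {prod.snd}, by rw [Finset.inf_singleton]; exact le_sup_right⟩

theorem mem_idealAdjoin_self (hI : IsUniversalIdeal P I) : α ∈ idealAdjoin P α I Y :=
  ⟨⊤_ C, ⊥, hI.2.2.2, {prod.fst}, by rw [Finset.inf_singleton]; exact le_sup_left⟩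

theorem isUniversalIdeal_idealAdjoin (hI : IsUniversalIdeal P I) :
    IsUniversalIdeal P (idealAdjoin P α I) := by
  classical
  refine ⟨?_, ?_, ?_, subset_idealAdjoin P α I _ hI.2.2.2⟩
  · rintro X X' m g φ ⟨Z, γ, hγ, s, hle⟩
    refine ⟨Z, γ, hγ, (s ×ˢ Finset.univ).image fun p => p.1 ≫ g p.2, le_of_eq_of_le ?_ hle⟩
    simp only [Finset.inf_image, Finset.inf_product_left, Function.comp_def, reindex_comp,
      reindex_finset_inf]
  · rintro X a b hab ⟨Z, γ, hγ, s, hle⟩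
    exact ⟨Z, γ, hγ, s, (Finset.inf_mono_fun fun f _ => reindex_mono P _ hab).trans hle⟩
  · rintro X₁ X₂ φ₁ φ₂ ⟨Z₁, γ₁, hγ₁, s₁, hle₁⟩ ⟨Z₂, γ₂, hγ₂, s₂, hle₂⟩
    -- one copy of `Y` serves both disjuncts
    let q₁ : Y ⨯ (Z₁ ⨯ Z₂) ⟶ Y ⨯ Z₁ := prod.map (𝟙 Y) prod.fst
    let q₂ : Y ⨯ (Z₁ ⨯ Z₂) ⟶ Y ⨯ Z₂ := prod.map (𝟙 Y) prod.snd
    refine ⟨Z₁ ⨯ Z₂, extSup P γ₁ γ₂, hI.2.2.1 _ _ _ _ hγ₁ hγ₂,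
      (s₁ ×ˢ s₂).image fun p => prod.lift (q₁ ≫ p.1) (q₂ ≫ p.2), ?_⟩
    calc ((s₁ ×ˢ s₂).image fun p => prod.lift (q₁ ≫ p.1) (q₂ ≫ p.2)).inf
          (fun f => P.map f.op (extSup P φ₁ φ₂))
        = P.map q₁.op (s₁.inf fun f => P.map f.op φ₁) ⊔
            P.map q₂.op (s₂.inf fun f => P.map f.op φ₂) := by
          simp only [Finset.inf_image, Function.comp_def, reindex_lift_extSup, reindex_comp,
            reindex_finset_inf, Finset.inf_sup_inf]
      _ ≤ P.map q₁.op (extSup P α γ₁) ⊔ P.map q₂.op (extSup P α γ₂) :=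
          sup_le_sup (reindex_mono P _ hle₁) (reindex_mono P _ hle₂)
      _ = extSup P α (P.map (prod.fst : Z₁ ⨯ Z₂ ⟶ Z₁).op γ₁) ⊔
            extSup P α (P.map (prod.snd : Z₁ ⨯ Z₂ ⟶ Z₂).op γ₂) := by
          rw [reindex_prodMap_id_extSup, reindex_prodMap_id_extSup]
      _ ≤ extSup P α (extSup P γ₁ γ₂) :=
          sup_le (sup_le_sup_left (reindex_mono P _ le_sup_left) _)
            (sup_le_sup_left (reindex_mono P _ le_sup_right) _)

theorem exists_extSup_mem_of_mem_idealAdjoin (hF : IsUniversalFilter P F) {X : C}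
    {φ : P.obj (op X)} (hφI : φ ∈ idealAdjoin P α I X) (hφF : φ ∈ F X) :
    ∃ (Z : C) (γ : P.obj (op Z)), γ ∈ I Z ∧ extSup P α γ ∈ F (Y ⨯ Z) := by
  obtain ⟨Z, γ, hγ, s, hle⟩ := hφI
  exact ⟨Z, γ, hγ, (hF.2 _).2.2 _ _ (hF.finset_inf_reindex_mem P s id hφF) hle⟩

theorem exists_genUnivIdeal_inter_nonempty_iff (hF : IsUniversalFilter P F)
    (hI : IsUniversalIdeal P I) :
    (∃ X : C, (genUnivIdeal P (adjoin P α I) X ∩ F X).Nonempty) ↔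
      (∃ X : C, (I X ∩ F X).Nonempty) ∨
        ∃ (Z : C) (γ : P.obj (op Z)), γ ∈ I Z ∧ extSup P α γ ∈ F (Y ⨯ Z) := by
  constructor
  · rintro ⟨X, φ, hgen, hφF⟩
    have hsub := (adjoin_subset_iff P α (G := idealAdjoin P α I)).2
      ⟨subset_idealAdjoin P α I, mem_idealAdjoin_self P α I hI⟩
    exact Or.inr (exists_extSup_mem_of_mem_idealAdjoin P α F I hF
      (hgen _ (isUniversalIdeal_idealAdjoin P α I hI) hsub) hφF)
  · rintro (⟨X, φ, hφI, hφF⟩ | ⟨Z, γ, hγ, hmem⟩)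
    · exact ⟨X, φ, fun J _ hsub => hsub X (Or.inl hφI), hφF⟩
    · refine ⟨Y ⨯ Z, _, fun J hJ hsub => ?_, hmem⟩
      obtain ⟨hIJ, hαJ⟩ := (adjoin_subset_iff P α).1 hsub
      exact hJ.2.2.1 Y Z α γ hαJ (hIJ Z hγ)

end Adjoin

theorem stmt14 {C : Type u₁} [Category.{v₁} C] [HasFiniteProducts C]
    (P : Cᵒᵖ ⥤ BoolAlg.{w}) (F I : ∀ X : C, Set (P.obj (op X)))
    (hF : IsUniversalFilter P F) (hI : IsUniversalIdeal P I)
    (Y : C) (α : P.obj (op Y)) :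
    ((∃ X : C,
        (genUnivFilter P
            (fun X' => F X' ∪ familyOfPoints P (fun _ : PUnit => Y) (fun _ => α) X') X ∩
          I X).Nonempty) ↔
      ∃ (X : C) (n : ℕ) (f : Fin n → (X ⟶ Y)) (β : P.obj (op X)),
        β ∈ F X ∧ β ⊓ (Finset.univ.inf fun i => P.map (f i).op α) ∈ I X) ∧
      ((∃ X : C,
        (genUnivIdeal P
            (fun X' => I X' ∪ familyOfPoints P (fun _ : PUnit => Y) (fun _ => α) X') X ∩
          F X).Nonempty) ↔
      (∃ X : C, (I X ∩ F X).Nonempty) ∨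
        ∃ (Z : C) (γ : P.obj (op Z)), γ ∈ I Z ∧
          P.map (prod.fst : Y ⨯ Z ⟶ Y).op α ⊔ P.map (prod.snd : Y ⨯ Z ⟶ Z).op γ ∈
            F (Y ⨯ Z)) :=
  ⟨exists_genUnivFilter_inter_nonempty_iff P α F I hF fun X _ _ hba ha => hI.2.1 X _ _ hba ha,
    exists_genUnivIdeal_inter_nonempty_iff P α F I hF hI⟩

end BooleanDoctrine
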